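/- Let θ be a nonzero real number and g the 3-dimensional real Lie algebra with basis e₁, e₂, e₃ and brackets [e₁,e₃] = θ·e₁ - e₂, [e₂,e₃] = e₁ + θ·e₂, [e₁,e₂] = 0. Then g × g admits an integrable complex structure. -/

import Mathlib

/-- Componentwise bracket on the product. -/
instance prodBracket {L : Type*} [LieRing L] : Bracket (L × L) (L × L) :=
  ⟨fun x y => (⁅x.1, y.1⁆, ⁅x.2, y.2⁆)⟩

instance prodLieRing {L : Type*} [LieRing L] : LieRing (L × L) where
  add_lie x y z := by ext <;> simp [Bracket.bracket]
  lie_add x y z := by ext <;> simp [Bracket.bracket]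
  lie_self x := by ext <;> simp [Bracket.bracket]
  leibniz_lie x y z := by ext <;> simp [Bracket.bracket]

instance prodLieAlgebra {L : Type*} [LieRing L] [LieAlgebra ℝ L] : LieAlgebra ℝ (L × L) where
  lie_smul t x y := by ext <;> simp [Bracket.bracket]

/-!
With `eᵢ = b (i - 1)`: on each factor, `span {e₁, e₂}` is stable under `ad e₃`, which acts there
as `-θ + J₀` for the rotation `J₀ : e₁ ↦ e₂ ↦ -e₁`; so `ad e₃` is `J₀`-complex linear. Take `J₀`
on both factors and pair the two copies of `e₃` by `(e₃, 0) ↦ (0, e₃)`. The Nijenhuis tensor of a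
complex structure is skew and `J`-antilinear in each argument, so it vanishes once it vanishes on
the complex basis `(e₁, 0), (0, e₁), (e₃, 0)`, where the only nonzero terms cancel by
`ad e₃ ∘ J₀ = J₀ ∘ ad e₃`.
-/

namespace LieAlgebra

variable {R L : Type*} [CommRing R] [LieRing L] [LieAlgebra R L]

def nijenhuis (J : L →ₗ[R] L) : L →ₗ[R] L →ₗ[R] L :=
  LinearMap.mk₂ R (fun x y => ⁅x, y⁆ + J ⁅J x, y⁆ + J ⁅x, J y⁆ - ⁅J x, J y⁆)
    (fun _ _ _ => by simp only [add_lie, map_add]; abel)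
    (fun _ _ _ => by simp only [smul_lie, map_smul, smul_add, smul_sub])
    (fun _ _ _ => by simp only [lie_add, map_add]; abel)
    (fun _ _ _ => by simp only [lie_smul, map_smul, smul_add, smul_sub])

variable {J : L →ₗ[R] L}

theorem nijenhuis_apply (x y : L) :
    nijenhuis J x y = ⁅x, y⁆ + J ⁅J x, y⁆ + J ⁅x, J y⁆ - ⁅J x, J y⁆ := rfl

theorem nijenhuis_swap (x y : L) : nijenhuis J y x = -nijenhuis J x y := by
  simp only [nijenhuis_apply, ← lie_skew y, ← lie_skew (J y), map_neg]
  abel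

theorem nijenhuis_self (x : L) : nijenhuis J x x = 0 := by
  rw [nijenhuis_apply, ← lie_skew x (J x), map_neg, lie_self, lie_self]
  abel

theorem nijenhuis_apply_right (hJ : ∀ x, J (J x) = -x) (x y : L) :
    nijenhuis J x (J y) = -J (nijenhuis J x y) := by
  simp only [nijenhuis_apply, hJ, lie_neg, map_neg, map_add, map_sub]
  abel

theorem nijenhuis_apply_left (hJ : ∀ x, J (J x) = -x) (x y : L) :
    nijenhuis J (J x) y = -J (nijenhuis J x y) := by
  rw [nijenhuis_swap, nijenhuis_apply_right hJ, nijenhuis_swap y, map_neg]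

theorem nijenhuis_eq_zero_of_span {ι : Type*} [LinearOrder ι] (hJ : ∀ x, J (J x) = -x)
    (u : ι → L) (hu : Submodule.span R (Set.range u ∪ Set.range (J ∘ u)) = ⊤)
    (h : ∀ i j, i < j → nijenhuis J (u i) (u j) = 0) : nijenhuis J = 0 := by
  have hu' : ∀ i j, nijenhuis J (u i) (u j) = 0 := by
    intro i j
    rcases lt_trichotomy i j with hij | rfl | hij
    · exact h i j hij
    · exact nijenhuis_self _
    · rw [nijenhuis_swap, h j i hij, neg_zero]
  have hs : ∀ x ∈ Set.range u ∪ Set.range (J ∘ u), ∀ y ∈ Set.range u ∪ Set.range (J ∘ u),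
      nijenhuis J x y = 0 := by
    rintro _ (⟨i, rfl⟩ | ⟨i, rfl⟩) _ (⟨j, rfl⟩ | ⟨j, rfl⟩) <;>
      simp only [Function.comp_apply, nijenhuis_apply_left hJ, nijenhuis_apply_right hJ, hu',
        map_zero, neg_zero]
  refine LinearMap.ext_on hu fun x hx => LinearMap.ext_on hu fun y hy => ?_
  simpa using hs x hx y hy

end LieAlgebra

open LieAlgebra

namespace Bianchi6

variable {g : Type*} [LieRing g] [LieAlgebra ℝ g] (b : Module.Basis (Fin 3) ℝ g)

noncomputable def rotation : g →ₗ[ℝ] g := b.constr ℝ ![b 1, -b 0, 0]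

@[simp] theorem rotation_apply_basis (i : Fin 3) : rotation b (b i) = ![b 1, -b 0, 0] i :=
  b.constr_basis ℝ _ i

noncomputable def complexStructure : (g × g) →ₗ[ℝ] (g × g) :=
  (rotation b ∘ₗ .fst ℝ g g - ((b.coord 2) ∘ₗ .snd ℝ g g).smulRight (b 2)).prod
    (rotation b ∘ₗ .snd ℝ g g + ((b.coord 2) ∘ₗ .fst ℝ g g).smulRight (b 2))

@[simp] theorem complexStructure_apply (x y : g) :
    complexStructure b (x, y) =
      (rotation b x - b.coord 2 y • b 2, rotation b y + b.coord 2 x • b 2) := rfl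

theorem complexStructure_sq (x : g × g) :
    complexStructure b (complexStructure b x) = -x := by
  suffices complexStructure b ∘ₗ complexStructure b = -LinearMap.id from
    LinearMap.congr_fun this x
  refine (b.prod b).ext fun i => ?_
  rcases i with i | i <;> fin_cases i <;> simp [Module.Basis.prod_apply]

noncomputable def complexBasis : Fin 3 → g × g := ![(b 0, 0), (0, b 0), (b 2, 0)]

theorem span_complexBasis :
    Submodule.span ℝ (Set.range (complexBasis b) ∪
      Set.range (complexStructure b ∘ complexBasis b)) = ⊤ := by
  refine eq_top_iff.2 ((b.prod b).span_eq ▸ Submodule.span_mono ?_)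
  rintro _ ⟨i | i, rfl⟩ <;> fin_cases i <;> simp [complexBasis, Module.Basis.prod_apply, Fin.exists_fin_succ]

theorem nijenhuis_complexStructure {θ : ℝ} (h13 : ⁅b 0, b 2⁆ = θ • b 0 - b 1)
    (h23 : ⁅b 1, b 2⁆ = b 0 + θ • b 1) : nijenhuis (complexStructure b) = 0 := by
  refine nijenhuis_eq_zero_of_span (complexStructure_sq b) _ (span_complexBasis b) ?_
  intro i j hij
  fin_cases i <;> fin_cases j <;> simp [complexBasis, nijenhuis_apply, h13, h23] at hij ⊢ <;> module

end Bianchi6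

theorem bianchi6_product_admits_general {g : Type*} [LieRing g] [LieAlgebra ℝ g]
    (b : Module.Basis (Fin 3) ℝ g) (θ : ℝ)
    (h13 : ⁅b 0, b 2⁆ = θ • b 0 - b 1) (h23 : ⁅b 1, b 2⁆ = b 0 + θ • b 1) :
    ∃ 𝒥 : (g × g) →ₗ[ℝ] (g × g), (∀ x, 𝒥 (𝒥 x) = -x) ∧
      ∀ x y : g × g,
        ⁅x, y⁆ + 𝒥 ⁅𝒥 x, y⁆ + 𝒥 ⁅x, 𝒥 y⁆ - ⁅𝒥 x, 𝒥 y⁆ = 0 :=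
  ⟨Bianchi6.complexStructure b, Bianchi6.complexStructure_sq b, fun x y =>
    LinearMap.congr_fun₂ (Bianchi6.nijenhuis_complexStructure b h13 h23) x y⟩

theorem bianchi6_product_admits {g : Type*} [LieRing g] [LieAlgebra ℝ g]
    (b : Module.Basis (Fin 3) ℝ g) (θ : ℝ) (hθ : θ ≠ 0)
    (h13 : ⁅b 0, b 2⁆ = θ • b 0 - b 1) (h23 : ⁅b 1, b 2⁆ = b 0 + θ • b 1)
    (h12 : ⁅b 0, b 1⁆ = 0) :
    ∃ 𝒥 : (g × g) →ₗ[ℝ] (g × g), (∀ x, 𝒥 (𝒥 x) = -x) ∧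
      ∀ x y : g × g,
        ⁅x, y⁆ + 𝒥 ⁅𝒥 x, y⁆ + 𝒥 ⁅x, 𝒥 y⁆ - ⁅𝒥 x, 𝒥 y⁆ = 0 :=
  bianchi6_product_admits_general b θ h13 h23
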